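/- arXiv:2212.12138 — 2 statements merged into one kernel-verified Lean document; each statement's English description precedes it below -/
import Mathlib

section
/- Let Q_0 be a partition whose parts are pairwise distinct integers each of size at least 2, let M be the sum of Q_0, let N ≥ M, and set r = N − M and Q_can = Q_0 together with r parts equal to 1. Assume moreover that r ≠ 2 or that Q_0 has no part equal to 2. Then Q_can is the unique maximizer of R among partitions of N containing Q_0 as a subpartition: for every partition Q ≠ Q_can of N containing Q_0, one has R(Q) < R(Q_can). -/
/-!
Writing `RQ Q = N² / 2 + ∑ₐ blockR (count a) a`, the ones contribute `r₁² / 2` and a part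
`a ≥ 2` of multiplicity `m` contributes at most about `m² a / 2`, well below half the square of
its mass `m a`. Passing from `Q_can` to `Q` trades `E = r - r₁` ones for extra parts of total mass
`E`; this gains at most `∑ₐ eₐ² / 2 ≤ E² / 2` among the parts of size `≥ 2` (`eₐ` the extra mass
of size `a`) but loses `(r² - r₁²) / 2 = E² / 2 + r₁ E` among the ones. The single block estimate
that is sharp is `c = 1`, `m = a = 2`; then `E = 2`, and `r ≠ 2` forces `r₁ > 0`, so `r₁ E > 0`.
-/

/-- The rank of a shape datum `Δ = ((T₁,d₁),…,(T_k,d_k))`: `N = Σ Tᵢ·dᵢ`. -/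
def rankShape (Δ : List (ℕ × ℕ)) : ℕ := (Δ.map (fun p => p.1 * p.2)).sum

/-- The invariant `R̄(Δ) = (1/2)(N² + Σ Tᵢ²·dᵢ)`. -/
def Rbar (Δ : List (ℕ × ℕ)) : ℚ :=
  ((rankShape Δ : ℚ) ^ 2 + (Δ.map (fun p => (p.1 : ℚ) ^ 2 * p.2)).sum) / 2

/-- The correction term subtracted from `R̄` for a single block `(T,d)`. -/
def corr (p : ℕ × ℕ) : ℚ :=
  if p.1 = 1 then ((p.2 : ℚ) ^ 2 + p.2) / 2 - 1
  else if p.1 = 2 then 3 * p.2 - 3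
  else if p.1 = 3 ∧ 1 < p.2 then 9 * p.2 - ((4 + 1 / 10 ^ 100) * p.2 + 5)
  else 0

/-- The invariant `R(Δ)`. -/
def Rshape (Δ : List (ℕ × ℕ)) : ℚ := Rbar Δ - (Δ.map corr).sum

/-- `R` of a partition `Q`: apply `Rshape` to the shape datum `((r₁,a₁),…,(r_m,a_m))`
where `a₁,…,a_m` are the distinct parts of `Q` and `rᵢ` their multiplicities. -/
noncomputable def RQ (Q : Multiset ℕ) : ℚ :=
  Rshape (Q.toFinset.toList.map (fun a => (Q.count a, a)))

/-- The contribution of the parts of size `a`, of multiplicity `m`, to `RQ Q - (Q.sum)² / 2`. -/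
def blockR (m a : ℕ) : ℚ := (m : ℚ) ^ 2 * a / 2 - corr (m, a)

section blockR

variable {m c a : ℕ}

@[simp] lemma blockR_zero_left (a : ℕ) : blockR 0 a = 0 := by simp [blockR, corr]

@[simp] lemma blockR_one_left (a : ℕ) : blockR 1 a = 1 - (a : ℚ) ^ 2 / 2 := by
  simp only [blockR, corr, if_true]; push_cast; ring

@[simp] lemma blockR_two_left (a : ℕ) : blockR 2 a = 3 - a := by
  simp only [blockR, corr]; norm_num; ring

lemma blockR_three_left (ha : 1 < a) : blockR 3 a = 5 - a / 2 + a / 10 ^ 100 := by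
  simp only [blockR, corr]
  rw [if_neg (by norm_num), if_neg (by norm_num), if_pos ⟨trivial, ha⟩]
  push_cast; ring

lemma blockR_of_four_le (hm : 4 ≤ m) : blockR m a = (m : ℚ) ^ 2 * a / 2 := by
  simp only [blockR, corr, if_neg (show m ≠ 1 by omega), if_neg (show m ≠ 2 by omega),
    if_neg (show ¬(m = 3 ∧ 1 < a) by omega), sub_zero]

lemma blockR_one_right (m : ℕ) : blockR m 1 = (m : ℚ) ^ 2 / 2 := by
  rcases (show m ≤ 3 ∨ 4 ≤ m by omega) with hm | hm
  · interval_cases m <;> norm_num [blockR, corr]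
  · simp [blockR_of_four_le hm]

lemma blockR_lt_sq (ha : 2 ≤ a) (hm : 0 < m) : blockR m a < ((m * a : ℕ) : ℚ) ^ 2 / 2 := by
  have ha' : (2 : ℚ) ≤ a := by exact_mod_cast ha
  push_cast
  rcases (show m = 1 ∨ m = 2 ∨ m = 3 ∨ 4 ≤ m by omega) with rfl | rfl | rfl | hm
  · norm_num; nlinarith
  · norm_num; nlinarith
  · rw [blockR_three_left (by omega)]; norm_num; nlinarith
  · have hm' : (4 : ℚ) ≤ m := by exact_mod_cast hm
    rw [blockR_of_four_le hm]
    nlinarith [mul_le_mul_of_nonneg_left ha' (by positivity : (0 : ℚ) ≤ m ^ 2 * a)]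

lemma blockR_sub_blockR_one_lt (ha : 2 ≤ a) (hm : 1 < m) (hexc : ¬(m = 2 ∧ a = 2)) :
    blockR m a - blockR 1 a < (((m - 1) * a : ℕ) : ℚ) ^ 2 / 2 := by
  have ha' : (2 : ℚ) ≤ a := by exact_mod_cast ha
  push_cast [Nat.cast_sub hm.le]
  rcases (show m = 2 ∨ m = 3 ∨ 4 ≤ m by omega) with rfl | rfl | hm
  · have : (3 : ℚ) ≤ a := by exact_mod_cast (show 3 ≤ a by omega)
    norm_num; nlinarith
  · rw [blockR_three_left (by omega)]; norm_num; nlinarith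
  · have hm' : (4 : ℚ) ≤ m := by exact_mod_cast hm
    have key : (0 : ℚ) ≤ (m - 2) * a - m := by nlinarith
    rw [blockR_of_four_le hm, blockR_one_left]
    nlinarith [mul_nonneg (by positivity : (0 : ℚ) ≤ m * a) key]

lemma blockR_sub_lt (ha : 2 ≤ a) (hc : c ≤ 1) (hcm : c < m)
    (hexc : ¬(c = 1 ∧ m = 2 ∧ a = 2)) :
    blockR m a - blockR c a < (((m - c) * a : ℕ) : ℚ) ^ 2 / 2 := by
  obtain rfl | rfl : c = 0 ∨ c = 1 := by omega
  · simpa using blockR_lt_sq ha hcm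
  · exact blockR_sub_blockR_one_lt ha hcm (by simpa using hexc)

lemma blockR_sub_le (ha : 2 ≤ a) (hc : c ≤ 1) (hcm : c ≤ m) :
    blockR m a - blockR c a ≤ (((m - c) * a : ℕ) : ℚ) ^ 2 / 2 := by
  rcases hcm.eq_or_lt with rfl | hcm
  · simp
  by_cases hexc : c = 1 ∧ m = 2 ∧ a = 2
  · obtain ⟨rfl, rfl, rfl⟩ := hexc
    norm_num
  · exact (blockR_sub_lt ha hc hcm hexc).le

end blockR

lemma sum_blockR_lt {S : Finset ℕ} {m c : ℕ → ℕ} (r₁ : ℕ) (hS : ∀ a ∈ S, 2 ≤ a)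
    (hc : ∀ a ∈ S, c a ≤ 1) (hcm : ∀ a ∈ S, c a ≤ m a)
    (hE : 0 < ∑ a ∈ S, (m a - c a) * a)
    (h2 : r₁ + ∑ a ∈ S, (m a - c a) * a ≠ 2 ∨ c 2 = 0) :
    (r₁ : ℚ) ^ 2 / 2 + ∑ a ∈ S, blockR (m a) a <
      ((r₁ + ∑ a ∈ S, (m a - c a) * a : ℕ) : ℚ) ^ 2 / 2 + ∑ a ∈ S, blockR (c a) a := by
  set e : ℕ → ℕ := fun a => (m a - c a) * a with he
  set E := ∑ a ∈ S, e a with hE_def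
  have hle : ∀ a ∈ S, blockR (m a) a - blockR (c a) a ≤ (e a : ℚ) ^ 2 / 2 :=
    fun a ha => blockR_sub_le (hS a ha) (hc a ha) (hcm a ha)
  have hsq : ∑ a ∈ S, (e a : ℚ) ^ 2 / 2 ≤ (E : ℚ) ^ 2 / 2 := by
    rw [← Finset.sum_div, hE_def, Nat.cast_sum]
    gcongr
    exact Finset.sum_sq_le_sq_sum_of_nonneg fun _ _ => by positivity
  suffices ∑ a ∈ S, (blockR (m a) a - blockR (c a) a) < (E : ℚ) ^ 2 / 2 + r₁ * E by
    rw [Finset.sum_sub_distrib] at this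
    push_cast
    linarith
  by_cases hstrict : ∃ a ∈ S, blockR (m a) a - blockR (c a) a < (e a : ℚ) ^ 2 / 2
  · calc ∑ a ∈ S, (blockR (m a) a - blockR (c a) a)
        < ∑ a ∈ S, (e a : ℚ) ^ 2 / 2 := Finset.sum_lt_sum hle hstrict
      _ ≤ (E : ℚ) ^ 2 / 2 := hsq
      _ ≤ (E : ℚ) ^ 2 / 2 + r₁ * E := le_add_of_nonneg_right (by positivity)
  push Not at hstrict
  have hexc : ∀ a ∈ S, e a ≠ 0 → c a = 1 ∧ m a = 2 ∧ a = 2 := by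
    intro a ha hea
    have hcm' : c a < m a := (hcm a ha).lt_of_ne fun h => hea (by simp [he, h])
    by_contra h
    exact (hstrict a ha).not_gt (blockR_sub_lt (hS a ha) (hc a ha) hcm' h)
  obtain ⟨a₀, ha₀, hea₀⟩ : ∃ a ∈ S, e a ≠ 0 := by
    by_contra! h
    exact hE.ne' (Finset.sum_eq_zero h)
  obtain ⟨hc₀, hm₀, rfl⟩ := hexc a₀ ha₀ hea₀
  have hE2 : E = 2 := by
    rw [hE_def, Finset.sum_eq_single_of_mem 2 ha₀ fun b hb hb2 =>
      by_contra fun h => hb2 (hexc b hb h).2.2]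
    simp [he, hc₀, hm₀]
  have hr₁ : 0 < r₁ := by omega
  calc ∑ a ∈ S, (blockR (m a) a - blockR (c a) a)
      ≤ ∑ a ∈ S, (e a : ℚ) ^ 2 / 2 := Finset.sum_le_sum hle
    _ ≤ (E : ℚ) ^ 2 / 2 := hsq
    _ < (E : ℚ) ^ 2 / 2 + r₁ * E := lt_add_of_pos_right _ (by rw [hE2]; positivity)

section Multiset

open Multiset

lemma RQ_eq_sum_of_subset {Q : Multiset ℕ} {S : Finset ℕ} (hS : Q.toFinset ⊆ S) :
    RQ Q = (Q.sum : ℚ) ^ 2 / 2 + ∑ a ∈ S, blockR (Q.count a) a := by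
  have hrank : (Q.toFinset.toList.map fun a => Q.count a * a).sum = Q.sum := by
    rw [Finset.sum_map_toList, Finset.sum_multiset_count Q]
    simp only [smul_eq_mul]
  unfold RQ Rshape Rbar rankShape
  simp only [List.map_map, Function.comp_def]
  rw [hrank, Finset.sum_map_toList, Finset.sum_map_toList,
    ← Finset.sum_subset hS fun a _ ha => by
      simp [count_eq_zero_of_notMem (mt mem_toFinset.2 ha)]]
  simp only [blockR, Finset.sum_sub_distrib, ← Finset.sum_div]
  ring

lemma RQ_eq_of_toFinset_subset_insert_one {Q : Multiset ℕ} {S : Finset ℕ} (hS1 : 1 ∉ S)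
    (hQS : Q.toFinset ⊆ insert 1 S) :
    RQ Q = (Q.sum : ℚ) ^ 2 / 2 + (Q.count 1 : ℚ) ^ 2 / 2 + ∑ a ∈ S, blockR (Q.count a) a := by
  rw [RQ_eq_sum_of_subset hQS, Finset.sum_insert hS1, blockR_one_right, add_assoc]

lemma RQ_add_replicate_one {Q₀ : Multiset ℕ} {S : Finset ℕ} (r : ℕ) (h1 : 1 ∉ Q₀)
    (hS1 : 1 ∉ S) (hQ₀S : Q₀.toFinset ⊆ S) :
    RQ (Q₀ + replicate r 1) =
      ((Q₀.sum + r : ℕ) : ℚ) ^ 2 / 2 + (r : ℚ) ^ 2 / 2 + ∑ a ∈ S, blockR (Q₀.count a) a := by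
  have hsupp : (Q₀ + replicate r 1).toFinset ⊆ insert 1 S := by
    rw [toFinset_add]
    exact Finset.union_subset (hQ₀S.trans (Finset.subset_insert 1 S))
      fun a ha => by
        rw [eq_of_mem_replicate (mem_toFinset.1 ha)]
        exact Finset.mem_insert_self 1 S
  rw [RQ_eq_of_toFinset_subset_insert_one hS1 hsupp,
    Finset.sum_congr rfl fun a ha => by rw [count_add, count_replicate,
      if_neg (ne_of_mem_of_not_mem ha hS1).symm, add_zero]]
  simp [count_eq_zero_of_notMem h1]

lemma sum_eq_sum_add_count_one_add {Q₀ Q : Multiset ℕ} (hsub : Q₀ ≤ Q) (h1 : 1 ∉ Q₀) :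
    Q.sum = Q₀.sum + Q.count 1 + ∑ a ∈ Q.toFinset.erase 1, (Q.count a - Q₀.count a) * a := by
  have hsupp : (Q - Q₀).toFinset ⊆ insert 1 (Q.toFinset.erase 1) :=
    (toFinset_subset.2 (subset_of_le tsub_le_self)).trans (Finset.insert_erase_subset 1 _)
  conv_lhs => rw [← add_tsub_cancel_of_le hsub, sum_add]
  rw [Finset.sum_multiset_count_of_subset _ _ hsupp, Finset.sum_insert (Finset.notMem_erase 1 _)]
  simp only [smul_eq_mul, mul_one, count_sub, count_eq_zero_of_notMem h1, Nat.sub_zero, add_assoc]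

lemma eq_add_replicate_one_of_sum_eq_zero {Q₀ Q : Multiset ℕ} (hpos : ∀ a ∈ Q, 0 < a)
    (hsub : Q₀ ≤ Q) (h1 : 1 ∉ Q₀)
    (h0 : ∑ a ∈ Q.toFinset.erase 1, (Q.count a - Q₀.count a) * a = 0) :
    Q = Q₀ + replicate (Q.count 1) 1 := by
  ext b
  rw [count_add, count_replicate]
  by_cases hb1 : b = 1
  · simp [hb1, count_eq_zero_of_notMem h1]
  rw [if_neg (Ne.symm hb1), add_zero]
  by_cases hb : b ∈ Q
  · have hterm := Finset.sum_eq_zero_iff.1 h0 b (Finset.mem_erase.2 ⟨hb1, mem_toFinset.2 hb⟩)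
    have := le_iff_count.1 hsub b
    have := hpos b hb
    rcases Nat.mul_eq_zero.1 hterm with h | h <;> omega
  · rw [count_eq_zero_of_notMem hb, count_eq_zero_of_notMem (mt (mem_of_le hsub) hb)]

end Multiset

theorem RQ_lt_RQ_can_of_ne_general (Q₀ : Multiset ℕ) (hnd : Q₀.Nodup) (h2 : ∀ a ∈ Q₀, 2 ≤ a)
    (N : ℕ)
    (hside : N - Q₀.sum ≠ 2 ∨ 2 ∉ Q₀)
    (Q : Multiset ℕ) (hpos : ∀ a ∈ Q, 0 < a) (hsum : Q.sum = N) (hsub : Q₀ ≤ Q)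
    (hne : Q ≠ Q₀ + Multiset.replicate (N - Q₀.sum) 1) :
    RQ Q < RQ (Q₀ + Multiset.replicate (N - Q₀.sum) 1) := by
  set S := Q.toFinset.erase 1
  have h1 : 1 ∉ Q₀ := fun h => by have := h2 1 h; omega
  have hS1 : 1 ∉ S := Finset.notMem_erase 1 _
  have hS : ∀ a ∈ S, 2 ≤ a := fun a ha => by
    have := hpos a (Multiset.mem_toFinset.1 (Finset.mem_of_mem_erase ha))
    have := Finset.ne_of_mem_erase ha
    omega
  have hQ₀S : Q₀.toFinset ⊆ S := fun a ha => Finset.mem_erase.2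
    ⟨ne_of_mem_of_not_mem (Multiset.mem_toFinset.1 ha) h1,
      Multiset.mem_toFinset.2 (Multiset.mem_of_le hsub (Multiset.mem_toFinset.1 ha))⟩
  have hr : N = Q₀.sum + Q.count 1 + ∑ a ∈ S, (Q.count a - Q₀.count a) * a :=
    hsum ▸ sum_eq_sum_add_count_one_add hsub h1
  have hE : 0 < ∑ a ∈ S, (Q.count a - Q₀.count a) * a := Nat.pos_of_ne_zero fun h0 => hne <| by
    convert eq_add_replicate_one_of_sum_eq_zero hpos hsub h1 h0 using 3
    omega
  have key := sum_blockR_lt (Q.count 1) hS (fun a _ => Multiset.nodup_iff_count_le_one.1 hnd a)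
    (fun a _ => Multiset.le_iff_count.1 hsub a) hE
    (by convert hside.imp_right Multiset.count_eq_zero_of_notMem using 2; omega)
  rw [RQ_eq_of_toFinset_subset_insert_one hS1 (Finset.insert_erase_subset 1 _),
    RQ_add_replicate_one _ h1 hS1 hQ₀S, hsum, show Q₀.sum + (N - Q₀.sum) = N by omega,
    show N - Q₀.sum = Q.count 1 + ∑ a ∈ S, (Q.count a - Q₀.count a) * a by omega]
  linarith

/-- Let `Q₀` be a partition with pairwise distinct parts, each of size at least 2,
`M` its sum, `N ≥ M`, `r = N − M` and `Q_can = Q₀ + {1,…,1}` (`r` ones).  Assume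
`r ≠ 2` or `Q₀` has no part equal to `2`.  Then `Q_can` is the unique maximizer of
`R` among partitions of `N` containing `Q₀` as a subpartition. -/
theorem RQ_lt_RQ_can_of_ne (Q₀ : Multiset ℕ) (hnd : Q₀.Nodup) (h2 : ∀ a ∈ Q₀, 2 ≤ a)
    (N : ℕ) (hN : Q₀.sum ≤ N)
    (hside : N - Q₀.sum ≠ 2 ∨ 2 ∉ Q₀)
    (Q : Multiset ℕ) (hpos : ∀ a ∈ Q, 0 < a) (hsum : Q.sum = N) (hsub : Q₀ ≤ Q)
    (hne : Q ≠ Q₀ + Multiset.replicate (N - Q₀.sum) 1) :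
    RQ Q < RQ (Q₀ + Multiset.replicate (N - Q₀.sum) 1) :=
  RQ_lt_RQ_can_of_ne_general Q₀ hnd h2 N hside Q hpos hsum hsub hne
end

section
/- Let d and N be integers with 2 ≤ d < N, and let Q_d be the partition of N consisting of ⌊N/d⌋ parts equal to d together with one part equal to N − d·⌊N/d⌋ when this is nonzero. Then max over integers i with 1 ≤ i ≤ ⌊N/2⌋ of σ_i(Q_d)/(i(N−i)) equals (d−1)/(N − ⌊N/d⌋). -/
/-- `ξ(n) = {n−1, n−3, …, n−2⌊n/2⌋+1}`, a multiset with `⌊n/2⌋` elements. -/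
def xi (n : ℕ) : Multiset ℕ := (Multiset.range (n / 2)).map (fun j => n - 1 - 2 * j)

/-- `Ξ(Q)`: the multiset union of `ξ(n)` over the parts `n` of `Q`. -/
def Xi (Q : Multiset ℕ) : Multiset ℕ := Q.bind xi

/-- `σ_i(Q)`: the sum of the `i` largest elements of `Ξ(Q)`, counted with
multiplicity (the total sum if `i` exceeds the cardinality). -/
def sigmaP (Q : Multiset ℕ) (i : ℕ) : ℕ :=
  (((Xi Q).sort (· ≤ ·)).reverse.take i).sum

/-- The partition `Q_d` of `N`: `⌊N/d⌋` parts equal to `d`, together with one part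
equal to `N − d·⌊N/d⌋` when this is nonzero. -/
def Qd (d N : ℕ) : Multiset ℕ :=
  Multiset.replicate (N / d) d + (if N % d = 0 then 0 else {N % d})

/-!
For every threshold `θ`, the sum of the `i` largest elements of a multiset is at most
`i * θ + ∑ (x - θ)₊`. For `Q_d`, with `N = d q + r`, the excess sum is at most
`q ⌊(d - θ)² / 4⌋ + ⌊(r - θ)² / 4⌋`. Take `θ = d - 1 - 2 s`; then
`(d - 1) i (N - i) - (N - q) * (bound)` is a concave quadratic in `i`, nonnegative at the
two ends of an interval of indices `i`, and these intervals (`0 ≤ 2 s ≤ d - 1`) cover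
`[0, N / 2]`. The value `(d - 1) / (N - q)` is attained at `i = q`, where the `q` largest
elements of `Ξ(Q_d)` all equal `d - 1`.
-/

theorem List.sum_take_le_mul_add_sum_map_tsub (L : List ℕ) (i θ : ℕ) :
    (L.take i).sum ≤ i * θ + (L.map (· - θ)).sum := by
  induction L generalizing i with
  | nil => simp
  | cons x L ih =>
    cases i with
    | zero => simp
    | succ i =>
      simp only [List.take_succ_cons, List.sum_cons, List.map_cons]
      have := ih i
      rw [Nat.succ_mul]
      omega

theorem List.mul_le_sum_take_of_le_countP {L : List ℕ} (hL : L.Pairwise (· ≥ ·)) {c k : ℕ}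
    (hk : k ≤ L.countP (c ≤ ·)) : k * c ≤ (L.take k).sum := by
  induction L generalizing k with
  | nil => simp_all
  | cons x L ih =>
    obtain ⟨hxL, hL⟩ := List.pairwise_cons.mp hL
    cases k with
    | zero => simp
    | succ k =>
      have hcx : c ≤ x := by
        by_contra hxc
        obtain ⟨y, hy, hcy⟩ : ∃ y ∈ L, c ≤ y := by
          simp only [List.countP_cons, hxc, decide_false, Bool.false_eq_true, if_false,
            add_zero] at hk
          simpa using List.countP_pos_iff.mp (show 0 < L.countP (c ≤ ·) by omega)
        exact hxc (hcy.trans (hxL y hy))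
      have := ih hL (k := k) (by simpa [List.countP_cons, hcx] using hk)
      simp only [List.take_succ_cons, List.sum_cons, Nat.succ_mul]
      omega

theorem sigmaP_le_mul_add_sum_tsub (Q : Multiset ℕ) (i θ : ℕ) :
    sigmaP Q i ≤ i * θ + ((Xi Q).map (· - θ)).sum := by
  have hsum : ((((Xi Q).sort (· ≤ ·)).reverse).map (· - θ)).sum = ((Xi Q).map (· - θ)).sum := by
    rw [List.map_reverse, List.sum_reverse, ← Multiset.sum_coe, ← Multiset.map_coe,
      Multiset.sort_eq]
  exact hsum ▸ List.sum_take_le_mul_add_sum_map_tsub _ i θ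

theorem mul_le_sigmaP_of_replicate_le {Q : Multiset ℕ} {k c : ℕ}
    (h : Multiset.replicate k c ≤ Xi Q) : k * c ≤ sigmaP Q k := by
  apply List.mul_le_sum_take_of_le_countP
  · exact List.pairwise_reverse.mpr ((Xi Q).pairwise_sort (· ≤ ·))
  · rw [List.countP_reverse, ← Multiset.coe_countP, Multiset.sort_eq]
    have hcount : (Multiset.replicate k c).countP (c ≤ ·) = k := by
      simp [Multiset.countP_eq_card.mpr (fun a ha => (Multiset.eq_of_mem_replicate ha).ge)]
    exact hcount ▸ Multiset.countP_le_of_le _ h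

/-- `⌊w² / 4⌋ = (w - 1) + (w - 3) + ⋯`, the total excess over `θ` of `ξ(n)` when `w = n - θ`. -/
def quarterSquare (w : ℕ) : ℕ := w / 2 * ((w + 1) / 2)

theorem quarterSquare_add_two (w : ℕ) : quarterSquare (w + 2) = quarterSquare w + w + 1 := by
  have hsum : w / 2 + (w + 1) / 2 = w := by omega
  rw [quarterSquare, quarterSquare, show (w + 2) / 2 = w / 2 + 1 by omega,
    show (w + 2 + 1) / 2 = (w + 1) / 2 + 1 by omega]
  ring_nf
  omega

theorem sum_range_tsub_two_mul_le_quarterSquare (m w : ℕ) :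
    ∑ j ∈ Finset.range m, (w - 1 - 2 * j) ≤ quarterSquare w := by
  induction m generalizing w with
  | zero => simp
  | succ m ih =>
    rcases w with _ | _ | w
    · simp
    · simp
    · have hshift : ∑ j ∈ Finset.range m, (w + 2 - 1 - 2 * (j + 1))
          = ∑ j ∈ Finset.range m, (w - 1 - 2 * j) :=
        Finset.sum_congr rfl fun j _ => by omega
      rw [Finset.sum_range_succ', hshift, quarterSquare_add_two]
      have := ih w
      omega

theorem xi_sum_map_tsub_le (n θ : ℕ) : ((xi n).map (· - θ)).sum ≤ quarterSquare (n - θ) := by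
  have hxi : ((xi n).map (· - θ)).sum = ∑ j ∈ Finset.range (n / 2), (n - θ - 1 - 2 * j) := by
    trans ∑ j ∈ Finset.range (n / 2), (n - 1 - 2 * j - θ)
    · rw [xi, Multiset.map_map]
      rfl
    · exact Finset.sum_congr rfl fun j _ => by omega
  exact hxi ▸ sum_range_tsub_two_mul_le_quarterSquare _ _

theorem Xi_sum_map_tsub_le (Q : Multiset ℕ) (θ : ℕ) :
    ((Xi Q).map (· - θ)).sum ≤ (Q.map fun n => quarterSquare (n - θ)).sum := by
  rw [Xi, Multiset.map_bind, Multiset.sum_bind]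
  exact Multiset.sum_map_le_sum_map _ _ fun n _ => xi_sum_map_tsub_le n θ

theorem Qd_sum_map {f : ℕ → ℕ} (hf : f 0 = 0) (d N : ℕ) :
    ((Qd d N).map f).sum = N / d * f d + f (N % d) := by
  by_cases h : N % d = 0 <;> simp [Qd, h, hf]

theorem sigmaP_Qd_le (d N i θ : ℕ) :
    sigmaP (Qd d N) i ≤ i * θ + N / d * quarterSquare (d - θ) + quarterSquare (N % d - θ) := by
  have h := (sigmaP_le_mul_add_sum_tsub (Qd d N) i θ).trans
    (Nat.add_le_add_left (Xi_sum_map_tsub_le (Qd d N) θ) _)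
  rwa [Qd_sum_map (f := fun n => quarterSquare (n - θ)) (by simp [quarterSquare]), ← add_assoc]
    at h

theorem replicate_le_Xi_Qd {d : ℕ} (hd : 2 ≤ d) (N : ℕ) :
    Multiset.replicate (N / d) (d - 1) ≤ Xi (Qd d N) := by
  have hmem : d - 1 ∈ xi d :=
    Multiset.mem_map.mpr ⟨0, Multiset.mem_range.mpr (by omega), by omega⟩
  rw [← Multiset.le_count_iff_replicate_le, Xi, Qd, Multiset.add_bind, Multiset.count_add,
    Multiset.count_bind, Multiset.map_replicate, Multiset.sum_replicate, smul_eq_mul]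
  exact Nat.le_add_right_of_le
    (Nat.le_mul_of_pos_right _ (Multiset.one_le_count_iff_mem.mpr hmem))

theorem nonneg_of_concave_quadratic {e β γ x y t : ℤ} (he : 0 ≤ e) (hxt : x ≤ t) (hty : t ≤ y)
    (hx : 0 ≤ -e * x ^ 2 + β * x + γ) (hy : 0 ≤ -e * y ^ 2 + β * y + γ) :
    0 ≤ -e * t ^ 2 + β * t + γ := by
  rcases hxt.eq_or_lt with rfl | hxt
  · exact hx
  · have hinterp : (y - x) * (-e * t ^ 2 + β * t + γ) = (y - t) * (-e * x ^ 2 + β * x + γ)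
        + (t - x) * (-e * y ^ 2 + β * y + γ) + e * (t - x) * (y - t) * (y - x) := by ring
    refine nonneg_of_mul_nonneg_right (a := y - x) ?_ (by linarith)
    rw [hinterp]
    have := mul_nonneg (mul_nonneg (mul_nonneg he (sub_nonneg.2 hxt.le)) (sub_nonneg.2 hty))
      (sub_nonneg.2 (hxt.trans_le hty).le)
    nlinarith [mul_nonneg (sub_nonneg.2 hty) hx, mul_nonneg (sub_nonneg.2 hxt.le) hy]

/- With `e = 2 s + m = d - 1`, `N = q (e + 1) + r` and `θ = m`, the next three lemmas read
`(N - q) (i θ + q ⌊(d - θ)² / 4⌋ + ⌊(r - θ)² / 4⌋) ≤ e i (N - i)` for `i` in an interval.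
At a left endpoint the difference contains a factor `n (n - 1)`, nonnegative only for
integers `n`: hence the case split at `n = 0` before `positivity`. -/
theorem excess_bound_of_mem_Icc (q s m r i : ℕ) (hlo : q * s ≤ i) (hhi : i ≤ q * (s + 1)) :
    ((q * (2 * s + m) + r) * (i * m + q * (s * (s + 1))) : ℤ)
      ≤ (2 * s + m) * i * (q * (2 * s + m + 1) + r - i) := by
  have key := nonneg_of_concave_quadratic (e := 2 * s + m) (t := i)
    (β := (2 * s + m) * (q * (2 * s + m + 1) + r) - (q * (2 * s + m) + r) * m)
    (γ := -(q * (2 * s + m) + r) * (q * (s * (s + 1)))) (by positivity)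
    (x := q * s) (by exact_mod_cast hlo) (y := q * (s + 1)) (by exact_mod_cast hhi) ?_ ?_
  · linear_combination key
  all_goals rcases s with _ | s <;> push_cast <;> ring_nf <;> positivity

theorem excess_bound_of_mem_Icc_of_remainder (q s m a b i : ℕ) (hab : a ≤ b) (hba : b ≤ a + 1)
    (hbs : b ≤ s) (hlo : q * s + a ≤ i) (hhi : i ≤ q * (s + 1) + b) :
    ((q * (2 * s + m) + (m + a + b)) * (i * m + q * (s * (s + 1)) + a * b) : ℤ)
      ≤ (2 * s + m) * i * (q * (2 * s + m + 1) + (m + a + b) - i) := by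
  have key := nonneg_of_concave_quadratic (e := 2 * s + m) (t := i)
    (β := (2 * s + m) * (q * (2 * s + m + 1) + (m + a + b)) - (q * (2 * s + m) + (m + a + b)) * m)
    (γ := -(q * (2 * s + m) + (m + a + b)) * (q * (s * (s + 1)) + a * b)) (by positivity)
    (x := q * s + a) (by exact_mod_cast hlo) (y := q * (s + 1) + b) (by exact_mod_cast hhi) ?_ ?_
  · linear_combination key
  all_goals
    obtain ⟨t, rfl⟩ := Nat.exists_eq_add_of_le hbs
    obtain rfl | rfl : b = a ∨ b = a + 1 := by omega
    all_goals rcases t with _ | t <;> push_cast <;> ring_nf <;> positivity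

theorem quarterSquare_two_mul_add_one (s : ℕ) : quarterSquare (2 * s + 1) = s * (s + 1) := by
  rw [quarterSquare, show (2 * s + 1) / 2 = s by omega, show (2 * s + 1 + 1) / 2 = s + 1 by omega]

theorem excess_bound_at_threshold (q s m r i : ℕ) (hr : r ≤ 2 * s + m)
    (hlo : q * s + (r - m) / 2 ≤ i) (hhi : i ≤ q * (s + 1) + (r - m + 1) / 2) :
    ((q * (2 * s + m) + r) * (i * m + q * quarterSquare (2 * s + 1) + quarterSquare (r - m)) : ℤ)
      ≤ (2 * s + m) * i * (q * (2 * s + m + 1) + r - i) := by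
  rw [quarterSquare_two_mul_add_one]
  rcases le_or_gt r m with hrm | hmr
  · rw [Nat.sub_eq_zero_of_le hrm] at hlo hhi ⊢
    simpa [quarterSquare] using
      excess_bound_of_mem_Icc q s m r i (by simpa using hlo) (by simpa using hhi)
  · obtain ⟨w, rfl⟩ := Nat.exists_eq_add_of_le hmr.le
    rw [Nat.add_sub_cancel_left] at hlo hhi ⊢
    have hab : w / 2 ≤ (w + 1) / 2 ∧ (w + 1) / 2 ≤ w / 2 + 1 ∧ (w + 1) / 2 ≤ s := by omega
    have hw : w = w / 2 + (w + 1) / 2 := by omega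
    rw [quarterSquare]
    generalize w / 2 = a, (w + 1) / 2 = b at *
    subst hw
    have := excess_bound_of_mem_Icc_of_remainder q s m a b i hab.1 hab.2.1 hab.2.2 hlo hhi
    push_cast at this ⊢
    linarith

theorem exists_mem_Icc_of_chain {lo hi : ℕ → ℕ} {S i : ℕ} (h0 : lo 0 ≤ i) (hS : i ≤ hi S)
    (hstep : ∀ s < S, lo (s + 1) ≤ hi s + 1) : ∃ s ≤ S, i ∈ Set.Icc (lo s) (hi s) := by
  induction S with
  | zero => exact ⟨0, le_rfl, h0, hS⟩
  | succ S ih =>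
    by_cases hiS : i ≤ hi S
    · obtain ⟨s, hs, hi⟩ := ih hiS fun s hs => hstep s (by omega)
      exact ⟨s, by omega, hi⟩
    · exact ⟨S + 1, le_rfl, by have := hstep S (by omega); omega, hS⟩

theorem sigmaP_Qd_mul_le {d : ℕ} (hd : 2 ≤ d) {N i : ℕ} (hi : 2 * i ≤ N) :
    ((N : ℤ) - (N / d : ℕ)) * sigmaP (Qd d N) i ≤ ((d : ℤ) - 1) * i * (N - i) := by
  have hσ := sigmaP_Qd_le d N i
  have hN : d * (N / d) + N % d = N := Nat.div_add_mod N d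
  have hr : N % d < d := Nat.mod_lt _ (by omega)
  generalize N / d = q, N % d = r at *
  have hqd : q * d ≤ 2 * (q * ((d - 1) / 2 + 1)) := by
    rw [← mul_assoc, mul_comm 2 q, mul_assoc]
    exact Nat.mul_le_mul_left q (by omega)
  -- `lo s` and `hi s` count the elements of `Ξ(Q_d)` that are `> θ`, resp. `≥ θ`, for
  -- `θ = d - 1 - 2 s`; so on `[lo s, hi s]` the threshold bound with this `θ` is exact.
  obtain ⟨s, hs, hlo, hhi⟩ := exists_mem_Icc_of_chain (i := i) (S := (d - 1) / 2)
    (lo := fun s => q * s + (r - (d - 1 - 2 * s)) / 2)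
    (hi := fun s => q * (s + 1) + (r - (d - 1 - 2 * s) + 1) / 2)
    (by omega) (by rw [mul_comm] at hN; omega) (fun s _ => by omega)
  obtain ⟨m, rfl⟩ : ∃ m, d = 2 * s + m + 1 := ⟨d - 1 - 2 * s, by omega⟩
  have hθ := hσ m
  rw [show 2 * s + m + 1 - m = 2 * s + 1 by omega] at hθ
  have hNZ : (N : ℤ) = (2 * s + m + 1) * q + r := by rw [← hN]; push_cast; ring
  calc ((N : ℤ) - q) * sigmaP (Qd (2 * s + m + 1) N) i
      = (q * (2 * s + m) + r) * sigmaP (Qd (2 * s + m + 1) N) i := by rw [hNZ]; ring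
    _ ≤ (q * (2 * s + m) + r)
          * (i * m + q * quarterSquare (2 * s + 1) + quarterSquare (r - m)) := by
        gcongr
        exact_mod_cast hθ
    _ ≤ (2 * s + m) * i * (q * (2 * s + m + 1) + r - i) :=
        excess_bound_at_threshold q s m r i (by omega) (by simpa using hlo) (by simpa using hhi)
    _ = _ := by rw [hNZ]; push_cast; ring

theorem sigmaP_Qd_div {d : ℕ} (hd : 2 ≤ d) (N : ℕ) :
    sigmaP (Qd d N) (N / d) = N / d * (d - 1) := by
  refine le_antisymm ?_ (mul_le_sigmaP_of_replicate_le (replicate_le_Xi_Qd hd N))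
  have h := sigmaP_Qd_le d N (N / d) (d - 1)
  have hr : N % d ≤ d - 1 := Nat.le_sub_one_of_lt (Nat.mod_lt N (by omega))
  rw [show d - (d - 1) = 1 by omega, Nat.sub_eq_zero_of_le hr] at h
  simpa [quarterSquare] using h

/-- For `2 ≤ d < N`, the maximum over `1 ≤ i ≤ ⌊N/2⌋` of `σ_i(Q_d)/(i(N−i))`
equals `(d−1)/(N − ⌊N/d⌋)`. -/
theorem max_sigma_ratio_Qd (d N : ℕ) (hd : 2 ≤ d) (hdN : d < N) :
    IsGreatest
      {x : ℚ | ∃ i : ℕ, 1 ≤ i ∧ i ≤ N / 2 ∧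
        x = (sigmaP (Qd d N) i : ℚ) / ((i : ℚ) * ((N : ℚ) - (i : ℚ)))}
      (((d : ℚ) - 1) / ((N : ℚ) - ((N / d : ℕ) : ℚ))) := by
  have hq : 1 ≤ N / d := (Nat.one_le_div_iff (by omega)).mpr hdN.le
  have hqN : N / d ≤ N / 2 := Nat.div_le_div_left hd (by omega)
  have hpos : ∀ {j : ℕ}, j ≤ N / 2 → (0 : ℚ) < N - j := fun {j} hj => by
    have : (j : ℚ) < N := by exact_mod_cast (show j < N by omega)
    linarith
  refine ⟨⟨N / d, hq, hqN, ?_⟩, ?_⟩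
  · have hq0 : (0 : ℚ) < (N / d : ℕ) := by exact_mod_cast hq
    rw [sigmaP_Qd_div hd, Nat.cast_mul, Nat.cast_sub (by omega : 1 ≤ d), Nat.cast_one,
      mul_div_mul_left _ _ hq0.ne']
  · rintro x ⟨i, hi, hiN, rfl⟩
    have hi0 : (0 : ℚ) < i := by exact_mod_cast hi
    have hbound : ((N : ℚ) - (N / d : ℕ)) * sigmaP (Qd d N) i ≤ ((d : ℚ) - 1) * i * (N - i) := by
      exact_mod_cast sigmaP_Qd_mul_le hd (i := i) (by omega)
    rw [div_le_div_iff₀ (mul_pos hi0 (hpos hiN)) (hpos hqN)]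
    linarith
end
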